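/- Let α, β > −1, 1 ≤ p < ∞ and b > 0. Then there exist C > 0 and n₀ ∈ ℕ such that for all n ≥ n₀ and all u with 0 ≤ u ≤ b/n, ∫_0^{u} |P_n^{(α,β)}(cos θ)|^p sin θ dθ ≤ C n^{αp − 2}. -/

import Mathlib

/-- The Jacobi polynomial `P_n^{(α,β)}` as a real function. -/
noncomputable def jacobiP (n : ℕ) (α β : ℝ) (x : ℝ) : ℝ :=
  ∑ s ∈ Finset.range (n + 1),
    (Real.Gamma (n + α + 1) / (Real.Gamma (s + α + 1) * Real.Gamma ((n : ℝ) - s + 1))) *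
    (Real.Gamma (n + β + 1) / (Real.Gamma ((n : ℝ) - s + β + 1) * Real.Gamma (s + 1))) *
    ((x - 1) / 2) ^ s * ((x + 1) / 2) ^ (n - s)

/-!
Near `x = 1` every term of the Jacobi sum is small: the factor `((1 - x) / 2) ^ s` is at most
`(b² / (4n²)) ^ s` when `x = cos θ` with `0 ≤ θ ≤ b / n`, while the two Gamma ratios of the `s`-th
coefficient grow at most like `n ^ α · (n / (α + 1)) ^ s / Γ(α + 1)` and `(n + β + 1) ^ s / s!`.
The factor `n ^ α` comes from Euler's limit formula, `Γ(n + α + 1) ≤ 2 n ^ α n!` for large `n`.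
So the `s`-th term is `O(n ^ α q ^ s / s!)` for a fixed `q`, the sum is `O(n ^ α exp q)`, and
`|P_n(cos θ)| ≤ K n ^ α` on `[0, b / n]`. Since `sin θ ≤ θ`, the integral over `[0, u]` is at most
`(K n ^ α) ^ p u² / 2 ≤ K ^ p (b² / 2) n ^ (α p - 2)`.
-/

open Real Finset Filter
open scoped Nat

namespace Real

theorem Gamma_mul_prod_range_add {s : ℝ} (hs : 0 < s) (n : ℕ) :
    Gamma s * ∏ j ∈ range n, (s + j) = Gamma (s + n) := by
  induction n with
  | zero => simp
  | succ n ih =>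
    rw [prod_range_succ, ← mul_assoc, ih, mul_comm, Nat.cast_succ, ← add_assoc,
      Gamma_add_one (by positivity)]

theorem pow_mul_Gamma_le_Gamma_add_nat {s : ℝ} (hs : 0 < s) (n : ℕ) :
    s ^ n * Gamma s ≤ Gamma (s + n) := by
  rw [← Gamma_mul_prod_range_add hs, mul_comm]
  gcongr
  calc s ^ n = ∏ _j ∈ range n, s := by rw [prod_const, card_range]
    _ ≤ ∏ j ∈ range n, (s + j) :=
      prod_le_prod (fun _ _ => hs.le) fun j _ => le_add_of_nonneg_right j.cast_nonneg

theorem Gamma_add_nat_le_pow_mul_Gamma {s : ℝ} (hs : 0 < s) (n : ℕ) :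
    Gamma (s + n) ≤ (s + n) ^ n * Gamma s := by
  rw [← Gamma_mul_prod_range_add hs, mul_comm]
  gcongr
  calc ∏ j ∈ range n, (s + j) ≤ ∏ _j ∈ range n, (s + n) :=
      prod_le_prod (fun j _ => by positivity) fun j hj => by
        gcongr; exact_mod_cast (mem_range.1 hj).le
    _ = (s + n) ^ n := by rw [prod_const, card_range]

theorem eventually_Gamma_add_one_le (α : ℝ) (hα : -1 < α) :
    ∀ᶠ n : ℕ in atTop, Gamma (n + α + 1) ≤ 2 * (n : ℝ) ^ α * n ! := by
  have hs : 0 < α + 1 := by linarith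
  have hΓ := Gamma_pos_of_pos hs
  -- `GammaSeq (α + 1) n = n ^ (α + 1) * n! * Γ(α + 1) / Γ(n + α + 2)` tends to `Γ(α + 1)`.
  filter_upwards [(GammaSeq_tendsto_Gamma (α + 1)).eventually_const_lt (half_lt_self hΓ),
    eventually_gt_atTop 0] with n hseq hn
  have hn' : (0 : ℝ) < n := by exact_mod_cast hn
  have hprod := Gamma_mul_prod_range_add hs (n + 1)
  have hpos : 0 < ∏ j ∈ range (n + 1), (α + 1 + j) := prod_pos fun j _ => by positivity
  rw [GammaSeq, lt_div_iff₀ hpos] at hseq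
  have hrec : Gamma (α + 1 + (n + 1 : ℕ)) = (n + α + 1) * Gamma (n + α + 1) := by
    rw [← Gamma_add_one (by linarith)]; push_cast; ring_nf
  have hbound : (n + α + 1) * Gamma (n + α + 1) < n * (2 * (n : ℝ) ^ α * n !) := by
    rw [← hrec, ← hprod, show (n : ℝ) * (2 * n ^ α * n !) = 2 * (n ^ (α + 1) * n !) by
      rw [rpow_add hn', rpow_one]; ring]
    linarith
  have hΓn : 0 < Gamma (n + α + 1) := Gamma_pos_of_pos (by linarith)
  exact le_of_mul_le_mul_left (by nlinarith) hn'

end Real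

theorem Gamma_div_Gamma_add_mul_Gamma_sub_le {α : ℝ} (hα : -1 < α) {n s : ℕ} (hs : s ≤ n)
    (hΓ : Gamma (n + α + 1) ≤ 2 * (n : ℝ) ^ α * n !) :
    Gamma (n + α + 1) / (Gamma (s + α + 1) * Gamma ((n : ℝ) - s + 1)) ≤
      2 * (n : ℝ) ^ α / Gamma (α + 1) * (n / (α + 1)) ^ s := by
  have hα1 : 0 < α + 1 := by linarith
  have hΓs : (α + 1) ^ s * Gamma (α + 1) ≤ Gamma (s + α + 1) := by
    rw [add_assoc, add_comm (s : ℝ)]; exact pow_mul_Gamma_le_Gamma_add_nat hα1 s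
  have hfac : Gamma ((n : ℝ) - s + 1) = (n - s)! := by
    rw [← Nat.cast_sub hs, Gamma_nat_eq_factorial]
  have hΓα := Gamma_pos_of_pos hα1
  rw [hfac]
  calc Gamma (n + α + 1) / (Gamma (s + α + 1) * (n - s)!)
      ≤ 2 * (n : ℝ) ^ α * n ! / ((α + 1) ^ s * Gamma (α + 1) * (n - s)!) := by gcongr
    _ = 2 * (n : ℝ) ^ α * n.descFactorial s / ((α + 1) ^ s * Gamma (α + 1)) := by
      rw [← Nat.factorial_mul_descFactorial hs]; push_cast; field_simp
    _ ≤ 2 * (n : ℝ) ^ α * n ^ s / ((α + 1) ^ s * Gamma (α + 1)) := by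
      gcongr; exact_mod_cast Nat.descFactorial_le_pow n s
    _ = 2 * (n : ℝ) ^ α / Gamma (α + 1) * (n / (α + 1)) ^ s := by
      rw [div_pow]; field_simp

theorem Gamma_div_Gamma_sub_mul_Gamma_add_le {β : ℝ} (hβ : -1 < β) {n s : ℕ} (hs : s ≤ n) :
    Gamma (n + β + 1) / (Gamma ((n : ℝ) - s + β + 1) * Gamma (s + 1)) ≤
      ((n : ℝ) + β + 1) ^ s / s ! := by
  have hx : 0 < (n : ℝ) - s + β + 1 := by
    have : (s : ℝ) ≤ n := by exact_mod_cast hs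
    linarith
  have h := Gamma_add_nat_le_pow_mul_Gamma hx s
  rw [show (n : ℝ) - s + β + 1 + s = n + β + 1 by ring] at h
  rw [Gamma_nat_eq_factorial, div_le_div_iff₀ (by positivity) (by positivity)]
  exact (mul_le_mul_of_nonneg_right h (by positivity)).trans_eq (by ring)

theorem abs_jacobiP_le {α β : ℝ} (hα : -1 < α) (hβ : -1 < β) {n : ℕ}
    (hΓ : Gamma (n + α + 1) ≤ 2 * (n : ℝ) ^ α * n !) {x : ℝ} (hx₁ : -1 ≤ x) (hx₂ : x ≤ 1) :
    |jacobiP n α β x| ≤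
      2 * (n : ℝ) ^ α / Gamma (α + 1) * exp (n * (n + β + 1) * ((1 - x) / 2) / (α + 1)) := by
  have hα1 : 0 < α + 1 := by linarith
  set K := 2 * (n : ℝ) ^ α / Gamma (α + 1) with hK
  set q := n * (n + β + 1) * ((1 - x) / 2) / (α + 1) with hq
  have hq0 : 0 ≤ q := by
    have : (0 : ℝ) ≤ n + β + 1 := by linarith [(n.cast_nonneg : (0 : ℝ) ≤ n)]
    have : 0 ≤ (1 - x) / 2 := by linarith
    positivity
  have hterm : ∀ s ∈ range (n + 1),
      |Gamma (n + α + 1) / (Gamma (s + α + 1) * Gamma ((n : ℝ) - s + 1)) *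
        (Gamma (n + β + 1) / (Gamma ((n : ℝ) - s + β + 1) * Gamma (s + 1))) *
        ((x - 1) / 2) ^ s * ((x + 1) / 2) ^ (n - s)| ≤ K * (q ^ s / s !) := by
    intro s hs
    have hsn : s ≤ n := Nat.lt_succ_iff.1 (mem_range.1 hs)
    have hsR : (s : ℝ) ≤ n := by exact_mod_cast hsn
    have hΓ₁ : 0 < Gamma (s + α + 1) := Gamma_pos_of_pos (by linarith [s.cast_nonneg (α := ℝ)])
    have hΓ₂ : 0 < Gamma ((n : ℝ) - s + β + 1) := Gamma_pos_of_pos (by linarith)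
    have hΓ₃ : 0 < Gamma (n + α + 1) := Gamma_pos_of_pos (by linarith [n.cast_nonneg (α := ℝ)])
    have hΓ₄ : 0 < Gamma (n + β + 1) := Gamma_pos_of_pos (by linarith [n.cast_nonneg (α := ℝ)])
    have h₁ : |(x - 1) / 2| = (1 - x) / 2 := by rw [abs_of_nonpos (by linarith)]; ring
    have h₂ : |((x + 1) / 2) ^ (n - s)| ≤ 1 := by
      rw [abs_pow, abs_of_nonneg (by linarith)]; exact pow_le_one₀ (by linarith) (by linarith)
    rw [abs_mul, abs_mul, abs_mul, abs_of_pos (by positivity), abs_of_pos (by positivity),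
      abs_pow, h₁]
    calc _ ≤ 2 * (n : ℝ) ^ α / Gamma (α + 1) * (n / (α + 1)) ^ s *
          (((n : ℝ) + β + 1) ^ s / s !) * ((1 - x) / 2) ^ s * 1 := by
          have hnβ : 0 ≤ ((n : ℝ) + β + 1) ^ s := pow_nonneg (by linarith) s
          gcongr ?_ * ?_ * _ * ?_
          · exact Gamma_div_Gamma_add_mul_Gamma_sub_le hα hsn hΓ
          · exact Gamma_div_Gamma_sub_mul_Gamma_add_le hβ hsn
      _ = K * (q ^ s / s !) := by simp only [hK, hq, div_pow, mul_pow]; ring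
  calc |jacobiP n α β x| ≤ ∑ s ∈ range (n + 1), K * (q ^ s / s !) :=
        (abs_sum_le_sum_abs _ _).trans (sum_le_sum hterm)
    _ ≤ K * exp q := by
      rw [← mul_sum]; gcongr; exact sum_le_exp_of_nonneg hq0 _

theorem continuous_jacobiP (n : ℕ) (α β : ℝ) : Continuous (jacobiP n α β) := by
  unfold jacobiP; fun_prop

theorem eventually_abs_jacobiP_cos_le {α β : ℝ} (hα : -1 < α) (hβ : -1 < β) (b : ℝ) :
    ∃ K : ℝ, 0 < K ∧ ∀ᶠ n : ℕ in atTop,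
      ∀ θ ∈ Set.Icc 0 (b / n), |jacobiP n α β (cos θ)| ≤ K * (n : ℝ) ^ α := by
  have hα1 : 0 < α + 1 := by linarith
  have hΓα := Gamma_pos_of_pos hα1
  refine ⟨2 / Gamma (α + 1) * exp (b ^ 2 / (2 * (α + 1))), by positivity, ?_⟩
  filter_upwards [eventually_Gamma_add_one_le α hα,
    tendsto_natCast_atTop_atTop.eventually_ge_atTop (β + 1), eventually_gt_atTop 0]
    with n hΓ hnβ hn θ hθ
  have hn' : (0 : ℝ) < n := by exact_mod_cast hn
  have hcos : 1 - cos θ ≤ (b / n) ^ 2 / 2 := by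
    have := one_sub_sq_div_two_le_cos (x := θ)
    have := pow_le_pow_left₀ hθ.1 hθ.2 2
    linarith
  have hexp : n * (n + β + 1) * ((1 - cos θ) / 2) / (α + 1) ≤ b ^ 2 / (2 * (α + 1)) := by
    have h1 : 0 ≤ 1 - cos θ := by linarith [cos_le_one θ]
    have h2 : (n : ℝ) + β + 1 ≤ 2 * n := by linarith
    have h3 : (n : ℝ) ^ 2 * (1 - cos θ) ≤ b ^ 2 / 2 :=
      calc (n : ℝ) ^ 2 * (1 - cos θ) ≤ n ^ 2 * ((b / n) ^ 2 / 2) := by gcongr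
        _ = b ^ 2 / 2 := by field_simp
    rw [← div_div]
    refine div_le_div_of_nonneg_right ?_ hα1.le
    nlinarith
  calc |jacobiP n α β (cos θ)|
      ≤ 2 * (n : ℝ) ^ α / Gamma (α + 1) * exp (n * (n + β + 1) * ((1 - cos θ) / 2) / (α + 1)) :=
        abs_jacobiP_le hα hβ hΓ (neg_one_le_cos θ) (cos_le_one θ)
    _ ≤ 2 * (n : ℝ) ^ α / Gamma (α + 1) * exp (b ^ 2 / (2 * (α + 1))) := by gcongr
    _ = 2 / Gamma (α + 1) * exp (b ^ 2 / (2 * (α + 1))) * (n : ℝ) ^ α := by ring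

theorem integral_rpow_abs_mul_sin_le {g : ℝ → ℝ} (hg : Continuous g) {p M u : ℝ} (hp : 0 ≤ p)
    (hu : 0 ≤ u) (hM : ∀ θ ∈ Set.Icc 0 u, |g θ| ≤ M) :
    ∫ θ in 0..u, |g θ| ^ p * sin θ ≤ M ^ p * (u ^ 2 / 2) := by
  have hle : ∀ θ ∈ Set.Icc 0 u, |g θ| ^ p * sin θ ≤ M ^ p * θ := fun θ hθ =>
    calc |g θ| ^ p * sin θ ≤ |g θ| ^ p * |sin θ| := by gcongr; exact le_abs_self _
      _ ≤ M ^ p * θ :=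
        mul_le_mul (rpow_le_rpow (abs_nonneg _) (hM θ hθ) hp)
          (abs_sin_le_abs.trans_eq (abs_of_nonneg hθ.1)) (abs_nonneg _)
          (rpow_nonneg ((abs_nonneg _).trans (hM θ hθ)) p)
  calc ∫ θ in 0..u, |g θ| ^ p * sin θ ≤ ∫ θ in 0..u, M ^ p * θ :=
        intervalIntegral.integral_mono_on hu
          (((hg.abs.rpow_const fun _ => Or.inr hp).mul continuous_sin).intervalIntegrable _ _)
          ((continuous_const.mul continuous_id).intervalIntegrable _ _) hle
    _ = M ^ p * (u ^ 2 / 2) := by rw [intervalIntegral.integral_const_mul, integral_id]; ring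

theorem jacobi_integral_near_one_upper_bound
    (α β p b : ℝ) (hα : -1 < α) (hβ : -1 < β) (hp : 1 ≤ p) (hb : 0 < b) :
    ∃ (C : ℝ) (n₀ : ℕ), 0 < C ∧ ∀ n : ℕ, n₀ ≤ n → ∀ u : ℝ, 0 ≤ u → u ≤ b / n →
      (∫ θ in (0 : ℝ)..u, |jacobiP n α β (Real.cos θ)| ^ p * Real.sin θ) ≤
        C * (n : ℝ) ^ (α * p - 2) := by
  obtain ⟨K, hK, hbound⟩ := eventually_abs_jacobiP_cos_le hα hβ b
  obtain ⟨n₀, hn₀⟩ := eventually_atTop.1 (hbound.and (eventually_gt_atTop 0))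
  refine ⟨K ^ p * (b ^ 2 / 2), n₀, by positivity, fun n hn u hu hub => ?_⟩
  obtain ⟨hPn, hn⟩ := hn₀ n hn
  have hn' : (0 : ℝ) < n := by exact_mod_cast hn
  have hp0 : 0 ≤ p := by linarith
  calc ∫ θ in (0 : ℝ)..u, |jacobiP n α β (cos θ)| ^ p * sin θ
      ≤ (K * (n : ℝ) ^ α) ^ p * (u ^ 2 / 2) :=
        integral_rpow_abs_mul_sin_le ((continuous_jacobiP n α β).comp continuous_cos) hp0 hu
          fun θ hθ => hPn θ ⟨hθ.1, hθ.2.trans hub⟩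
    _ ≤ (K * (n : ℝ) ^ α) ^ p * ((b / n) ^ 2 / 2) := by gcongr
    _ = K ^ p * (b ^ 2 / 2) * (n : ℝ) ^ (α * p - 2) := by
      rw [mul_rpow hK.le (by positivity), ← rpow_mul hn'.le, rpow_sub hn', rpow_two]
      field_simp
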